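/- arXiv:2105.07276 — 9 statements merged into one kernel-verified Lean document; each statement's English description precedes it below -/
import Mathlib

section
/- In a join-semilattice with top 1 whose sections are lattices satisfying the compatibility condition, for z,u ∈ [x,1] the element z ∧_x u is the infimum of z and u in S; in particular z ∧ u exists in S if and only if z and u have a common lower bound. -/
/-- In a join-semilattice with top whose sections are lattices satisfying the
compatibility condition, for `z, u ∈ [x,⊤]` the element `z ∧_x u` is the infimum
of `z` and `u` in `S`; in particular `z ∧ u` exists iff `z` and `u` have a
common lower bound. -/
theorem stmt2 {S : Type*} [SemilatticeSup S] [OrderTop S]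
    (m : S → S → S → S)
    (hmeet : ∀ x z u : S, x ≤ z → x ≤ u →
      x ≤ m x z u ∧ m x z u ≤ z ∧ m x z u ≤ u ∧
        ∀ w : S, x ≤ w → w ≤ z → w ≤ u → w ≤ m x z u)
    (compat : ∀ x y z u : S, x ≤ y → y ≤ z → y ≤ u → m x z u = m y z u) :
    (∀ x z u : S, x ≤ z → x ≤ u → IsGLB {z, u} (m x z u)) ∧
    (∀ z u : S, (∃ w : S, IsGLB {z, u} w) ↔ ∃ c : S, c ≤ z ∧ c ≤ u) := by
  have main : ∀ x z u : S, x ≤ z → x ≤ u → IsGLB {z, u} (m x z u) := by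
    intro x z u hxz hxu
    obtain ⟨h1, h2, h3, h4⟩ := hmeet x z u hxz hxu
    constructor
    · rintro a (rfl | rfl)
      · exact h2
      · simp_all
    · intro w hw
      have hwz : w ≤ z := hw (by simp)
      have hwu : w ≤ u := hw (by simp)
      have hv : w ⊔ x ≤ m x z u :=
        h4 _ le_sup_right (sup_le hwz hxz) (sup_le hwu hxu)
      exact le_sup_left.trans hv
  refine ⟨main, fun z u => ⟨?_, ?_⟩⟩
  · rintro ⟨w, hw⟩
    exact ⟨w, hw.1 (by simp), hw.1 (by simp)⟩
  · rintro ⟨c, hcz, hcu⟩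
    exact ⟨m c z u, main c z u hcz hcu⟩
end

section
/- Let S be a join-semilattice with top 1 whose sections are pseudocomplemented lattices and x → y := (x ∨ y)^y. Then ((x → y) → y) → y = x → y for all x,y. -/
/-- `S` is a join-semilattice with top whose sections `[y,⊤]` are pseudocomplemented
lattices: `pc a y` is the pseudocomplement `a^y` of `a` in the section `[y,⊤]`,
and `x → y := pc (x ⊔ y) y`. -/
theorem stmt8 {S : Type*} [SemilatticeSup S] [OrderTop S] (pc : S → S → S)
    (hsec : ∀ a b y : S, y ≤ a → y ≤ b → ∃ c : S, IsGLB {a, b} c)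
    (hle : ∀ a y : S, y ≤ a → y ≤ pc a y)
    (hglb : ∀ a y : S, y ≤ a → IsGLB {a, pc a y} y)
    (hmax : ∀ a b y : S, y ≤ a → y ≤ b → IsGLB {a, b} y → b ≤ pc a y) :
    ∀ x y : S, pc (pc (pc (x ⊔ y) y ⊔ y) y ⊔ y) y = pc (x ⊔ y) y := by
  -- antitonicity of pc in the section
  have anti : ∀ a b y : S, y ≤ a → y ≤ b → a ≤ b → pc b y ≤ pc a y := by
    intro a b y ha hb hab
    obtain ⟨c, hc⟩ := hsec a (pc b y) y ha (hle b y hb)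
    have hca : c ≤ a := hc.1 (Set.mem_insert _ _)
    have hcp : c ≤ pc b y := hc.1 (Set.mem_insert_of_mem _ rfl)
    have hcy : c = y := by
      refine le_antisymm ((hglb b y hb).2 ?_) (hc.2 ?_)
      · rintro z (rfl | rfl)
        · exact hca.trans hab
        · exact hcp
      · rintro z (rfl | rfl)
        · exact ha
        · exact hle b y hb
    exact hmax a (pc b y) y ha (hle b y hb) (hcy ▸ hc)
  -- a ≤ a** in the section
  have dbl : ∀ a y : S, y ≤ a → a ≤ pc (pc a y) y := by
    intro a y ha
    refine hmax (pc a y) a y (hle a y ha) ha ?_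
    have := hglb a y ha
    rwa [Set.pair_comm] at this
  intro x y
  set a := x ⊔ y with ha
  have hya : y ≤ a := le_sup_right
  have h1 : y ≤ pc a y := hle a y hya
  rw [sup_eq_left.2 h1]
  have h2 : y ≤ pc (pc a y) y := hle _ y h1
  rw [sup_eq_left.2 h2]
  refine le_antisymm ?_ ?_
  · exact anti a (pc (pc a y) y) y hya h2 (dbl a y hya)
  · exact dbl (pc a y) y h1
end

section
/- In a non-classical implication semilattice, for any c ≤ a, b we have: a ∧ b = c if and only if b ≤ a → c. Consequently, for each c and each a ∈ [c,1], the element a → c is the pseudocomplement of a in the interval [c,1]. -/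
/-- In a non-classical implication semilattice (join-semilattice with top, partial
meet `m` defined for pairs with a common lower bound, and implication `imp`
satisfying axioms (1)-(4)), for `c ≤ a, b`: `a ∧ b = c` iff `b ≤ a → c`.
Consequently `a → c` is the pseudocomplement of `a` in the section `[c,⊤]`. -/
theorem stmt10 {S : Type*} [SemilatticeSup S] [OrderTop S] (m imp : S → S → S)
    (hm : ∀ a b c : S, c ≤ a → c ≤ b → IsGLB {a, b} (m a b))
    (ax1 : ∀ x y : S, y ≤ imp x y)
    (ax2 : ∀ x y : S, m (x ⊔ y) (imp x y) = y)
    (ax3 : ∀ x y : S, imp (x ⊔ y) y = imp x y)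
    (ax4 : ∀ x y z : S, y ≤ imp (x ⊔ z) (m (x ⊔ z) (y ⊔ z))) :
    (∀ a b c : S, c ≤ a → c ≤ b → (m a b = c ↔ b ≤ imp a c)) ∧
    (∀ a c : S, c ≤ a →
      c ≤ imp a c ∧ m a (imp a c) = c ∧
        ∀ b : S, c ≤ b → m a b = c → b ≤ imp a c) := by
  have key : ∀ a b c : S, c ≤ a → c ≤ b → (m a b = c ↔ b ≤ imp a c) := by
    intro a b c hca hcb
    constructor
    · intro h
      have := ax4 a b c
      rwa [sup_eq_left.mpr hca, sup_eq_left.mpr hcb, h] at this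
    · intro hb
      -- m a (imp a c) = c
      have h2 := ax2 a c
      rw [sup_eq_left.mpr hca] at h2
      have hglb := hm a b c hca hcb
      have hglb' := hm a (imp a c) c hca (ax1 a c)
      rw [h2] at hglb'
      apply le_antisymm
      · -- m a b is a lower bound of {a, imp a c}
        apply hglb'.2
        intro x hx
        rcases hx with rfl | hx
        · exact hglb.1 (by simp)
        · simp only [Set.mem_singleton_iff] at hx
          subst hx
          exact le_trans (hglb.1 (by simp)) hb
      · exact hglb.2 (by rintro x (rfl | hx); · exact hca
                         · simp only [Set.mem_singleton_iff] at hx; subst hx; exact hcb)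
  refine ⟨key, fun a c hca => ?_⟩
  have h2 := ax2 a c
  rw [sup_eq_left.mpr hca] at h2
  exact ⟨ax1 a c, h2, fun b hcb hab => (key a b c hca hcb).mp hab⟩
end

section
/- In a relatively residuated join-semilattice, a ≤ (a → b) → b; if a ≤ b then b → c ≤ a → c; and ((a → b) → b) → b = a → b. -/
/-- `(R,⊔,mul,imp,⊤)` is a relatively residuated join-semilattice: `mul` is a
partial commutative monotone monoid operation (its axioms required only on pairs
with a common lower bound, and dominating all common lower bounds) with unit `⊤`,
satisfying relative adjointness and `(x ⊔ y) → y = x → y`. -/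
theorem stmt14 {R : Type*} [SemilatticeSup R] [OrderTop R] (mul imp : R → R → R)
    (hbound : ∀ a b c : R, c ≤ a → c ≤ b → c ≤ mul a b)
    (hone : ∀ a : R, mul a ⊤ = a)
    (hone2 : ∀ a : R, mul ⊤ a = a)
    (hcomm : ∀ a b : R, (∃ c, c ≤ a ∧ c ≤ b) → mul a b = mul b a)
    (hassoc : ∀ a b c : R, (∃ d, d ≤ a ∧ d ≤ b ∧ d ≤ c) →
      mul (mul a b) c = mul a (mul b c))
    (hmono : ∀ a b c : R, (∃ d, d ≤ a ∧ d ≤ c) → a ≤ b → mul a c ≤ mul b c)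
    (hadj : ∀ x y z : R, mul (x ⊔ z) (y ⊔ z) ≤ z ↔ x ⊔ z ≤ imp y z)
    (himp : ∀ x y : R, imp (x ⊔ y) y = imp x y) :
    (∀ a b : R, a ≤ imp (imp a b) b) ∧
    (∀ a b c : R, a ≤ b → imp b c ≤ imp a c) ∧
    (∀ a b : R, imp (imp (imp a b) b) b = imp a b) := by
  -- L0 : z ≤ imp y z
  have L0 : ∀ y z : R, z ≤ imp y z := by
    intro y z
    have h1 : mul (y ⊔ z) z ≤ z := by
      have := hmono (y ⊔ z) ⊤ z ⟨z, le_sup_right, le_refl z⟩ le_top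
      rwa [hone2] at this
    have h2 : mul z (y ⊔ z) ≤ z := by
      rwa [hcomm z (y ⊔ z) ⟨z, le_refl z, le_sup_right⟩]
    have := (hadj z y z).mp (by simpa using h2)
    simpa using this
  -- L1 : mul (imp a b) (a ⊔ b) ≤ b
  have L1 : ∀ a b : R, mul (imp a b) (a ⊔ b) ≤ b := by
    intro a b
    have hsup : imp a b ⊔ b = imp a b := sup_eq_left.mpr (L0 a b)
    have := (hadj (imp a b) a b).mpr (by rw [hsup])
    rwa [hsup] at this
  -- Fact 1
  have F1 : ∀ a b : R, a ≤ imp (imp a b) b := by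
    intro a b
    have hsup : imp a b ⊔ b = imp a b := sup_eq_left.mpr (L0 a b)
    have hm : mul (a ⊔ b) (imp a b ⊔ b) ≤ b := by
      rw [hsup, hcomm (a ⊔ b) (imp a b) ⟨b, le_sup_right, L0 a b⟩]
      exact L1 a b
    exact le_trans le_sup_left ((hadj a (imp a b) b).mp hm)
  -- Fact 2
  have F2 : ∀ a b c : R, a ≤ b → imp b c ≤ imp a c := by
    intro a b c hab
    have hsup : imp b c ⊔ c = imp b c := sup_eq_left.mpr (L0 b c)
    have hm : mul (imp b c ⊔ c) (a ⊔ c) ≤ c := by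
      rw [hsup]
      calc mul (imp b c) (a ⊔ c) = mul (a ⊔ c) (imp b c) :=
            hcomm _ _ ⟨c, L0 b c, le_sup_right⟩
        _ ≤ mul (b ⊔ c) (imp b c) :=
            hmono _ _ _ ⟨c, le_sup_right, L0 b c⟩ (sup_le_sup_right hab c)
        _ = mul (imp b c) (b ⊔ c) := hcomm _ _ ⟨c, le_sup_right, L0 b c⟩
        _ ≤ c := L1 b c
    have := (hadj (imp b c) a c).mp hm
    rw [hsup] at this
    exact this
  refine ⟨F1, F2, ?_⟩
  intro a b
  exact le_antisymm (F2 _ _ _ (F1 a b)) (F1 (imp a b) b)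
end

section
/- Let (R,∨,⊙,→,1) satisfy all axioms of a relatively residuated join-semilattice except relative adjointness. Then relative adjointness holds if and only if the three conditions hold: x ∨ z ≤ y → (((x ∨ z) ⊙ (y ∨ z)) ∨ z), x ≤ y → x, and (x ∨ y) ⊙ (x → y) ≤ y. -/
/-- Let `(R,⊔,mul,imp,⊤)` satisfy all axioms of a relatively residuated
join-semilattice except relative adjointness. Then relative adjointness holds
iff conditions (17), (18) and (19) hold. -/
theorem stmt15 {R : Type*} [SemilatticeSup R] [OrderTop R] (mul imp : R → R → R)
    (hbound : ∀ a b c : R, c ≤ a → c ≤ b → c ≤ mul a b)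
    (hone : ∀ a : R, mul a ⊤ = a)
    (hone2 : ∀ a : R, mul ⊤ a = a)
    (hcomm : ∀ a b : R, (∃ c, c ≤ a ∧ c ≤ b) → mul a b = mul b a)
    (hassoc : ∀ a b c : R, (∃ d, d ≤ a ∧ d ≤ b ∧ d ≤ c) →
      mul (mul a b) c = mul a (mul b c))
    (hmono : ∀ a b c : R, (∃ d, d ≤ a ∧ d ≤ c) → a ≤ b → mul a c ≤ mul b c)
    (himp : ∀ x y : R, imp (x ⊔ y) y = imp x y) :
    (∀ x y z : R, mul (x ⊔ z) (y ⊔ z) ≤ z ↔ x ⊔ z ≤ imp y z) ↔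
      ((∀ x y z : R, x ⊔ z ≤ imp y (mul (x ⊔ z) (y ⊔ z) ⊔ z)) ∧
       (∀ x y : R, x ≤ imp y x) ∧
       (∀ x y : R, mul (x ⊔ y) (imp x y) ≤ y)) := by
  constructor
  · intro A
    have h18 : ∀ x y : R, x ≤ imp y x := by
      intro x y
      have h1 : mul x (y ⊔ x) = mul (y ⊔ x) x :=
        hcomm _ _ ⟨x, le_refl x, le_sup_right⟩
      have h2 : mul (y ⊔ x) x ≤ mul ⊤ x :=
        hmono _ _ _ ⟨x, le_sup_right, le_refl x⟩ le_top
      have h3 : mul (x ⊔ x) (y ⊔ x) ≤ x := by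
        rw [sup_idem, h1]
        simpa [hone2] using h2
      have h4 := (A x y x).mp h3
      simpa using h4
    refine ⟨?_, h18, ?_⟩
    · intro x y z
      set m := mul (x ⊔ z) (y ⊔ z) with hm
      have hzm : z ≤ m := hbound _ _ _ le_sup_right le_sup_right
      have hmy : m ≤ y ⊔ z := by
        calc m ≤ mul ⊤ (y ⊔ z) := hmono _ _ _ ⟨z, le_sup_right, le_sup_right⟩ le_top
          _ = y ⊔ z := hone2 _
      have hmx : m ≤ x ⊔ z := by
        have hc : m = mul (y ⊔ z) (x ⊔ z) := hcomm _ _ ⟨z, le_sup_right, le_sup_right⟩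
        calc m = mul (y ⊔ z) (x ⊔ z) := hc
          _ ≤ mul ⊤ (x ⊔ z) := hmono _ _ _ ⟨z, le_sup_right, le_sup_right⟩ le_top
          _ = x ⊔ z := hone2 _
      have hxm : x ⊔ m = x ⊔ z :=
        le_antisymm (sup_le le_sup_left hmx) (sup_le le_sup_left (hzm.trans le_sup_right))
      have hym : y ⊔ m = y ⊔ z :=
        le_antisymm (sup_le le_sup_left hmy) (sup_le le_sup_left (hzm.trans le_sup_right))
      have key : mul (x ⊔ m) (y ⊔ m) ≤ m := by rw [hxm, hym]
      have h5 : x ⊔ m ≤ imp y m := (A x y m).mp key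
      have hmz : m ⊔ z = m := sup_eq_left.mpr hzm
      rw [hmz]
      exact le_trans (sup_le_sup_left hzm x) h5
    · intro x y
      have h1 : imp x y ⊔ y ≤ imp x y := sup_le (le_refl _) (h18 y x)
      have h2 : mul (imp x y ⊔ y) (x ⊔ y) ≤ y := (A (imp x y) x y).mpr h1
      have h3 : imp x y ⊔ y = imp x y := sup_eq_left.mpr (h18 y x)
      have h4 : mul (x ⊔ y) (imp x y) = mul (imp x y) (x ⊔ y) :=
        hcomm _ _ ⟨y, le_sup_right, h18 y x⟩
      rw [h4]
      rw [h3] at h2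
      exact h2
  · rintro ⟨h17, h18, h19⟩ x y z
    constructor
    · intro h
      have hmz : mul (x ⊔ z) (y ⊔ z) ⊔ z = z := sup_eq_right.mpr h
      have := h17 x y z
      rwa [hmz] at this
    · intro h
      have h1 : mul (x ⊔ z) (y ⊔ z) ≤ mul (imp y z) (y ⊔ z) :=
        hmono _ _ _ ⟨z, le_sup_right, le_sup_right⟩ h
      have h2 : mul (imp y z) (y ⊔ z) = mul (y ⊔ z) (imp y z) :=
        hcomm _ _ ⟨z, h18 z y, le_sup_right⟩
      have h3 : mul (y ⊔ z) (imp y z) ≤ z := h19 y z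
      calc mul (x ⊔ z) (y ⊔ z) ≤ mul (imp y z) (y ⊔ z) := h1
        _ = mul (y ⊔ z) (imp y z) := h2
        _ ≤ z := h3
end

section
/- The non-classical implication semilattices are exactly the divisible relatively residuated join-semilattices satisfying x ⊙ x = x and y ≤ (x ∨ z) → ((x ∨ z) ⊙ (y ∨ z)). In particular, in a relatively residuated join-semilattice with idempotent ⊙, a ⊙ b equals the infimum a ∧ b whenever a,b have a common lower bound. -/
/-- A relatively residuated join-semilattice structure on a join-semilattice with
top `⊤`, with partial multiplication `mul` (axioms required on pairs with a common
lower bound) and implication `imp`. -/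
structure IsRRJS {R : Type*} [SemilatticeSup R] [OrderTop R]
    (mul imp : R → R → R) : Prop where
  bound : ∀ a b c : R, c ≤ a → c ≤ b → c ≤ mul a b
  mul_top : ∀ a : R, mul a ⊤ = a
  top_mul : ∀ a : R, mul ⊤ a = a
  comm : ∀ a b : R, (∃ c, c ≤ a ∧ c ≤ b) → mul a b = mul b a
  assoc : ∀ a b c : R, (∃ d, d ≤ a ∧ d ≤ b ∧ d ≤ c) →
    mul (mul a b) c = mul a (mul b c)
  mono : ∀ a b c : R, (∃ d, d ≤ a ∧ d ≤ c) → a ≤ b → mul a c ≤ mul b c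
  adj : ∀ x y z : R, mul (x ⊔ z) (y ⊔ z) ≤ z ↔ x ⊔ z ≤ imp y z
  imp_sup : ∀ x y : R, imp (x ⊔ y) y = imp x y

/-- A non-classical implication semilattice structure: `meet a b` is the infimum
of `a` and `b` whenever they have a common lower bound, and `imp` satisfies
axioms (1)-(4). -/
structure IsNCIS {S : Type*} [SemilatticeSup S] [OrderTop S]
    (meet imp : S → S → S) : Prop where
  glb : ∀ a b c : S, c ≤ a → c ≤ b → IsGLB {a, b} (meet a b)
  ax1 : ∀ x y : S, y ≤ imp x y
  ax2 : ∀ x y : S, meet (x ⊔ y) (imp x y) = y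
  ax3 : ∀ x y : S, imp (x ⊔ y) y = imp x y
  ax4 : ∀ x y z : S, y ≤ imp (x ⊔ z) (meet (x ⊔ z) (y ⊔ z))

section Helpers
variable {R : Type*} [SemilatticeSup R] [OrderTop R]

lemma rrjs_glb {mul imp : R → R → R} (h : IsRRJS mul imp) {a b c : R}
    (hca : c ≤ a) (hcb : c ≤ b) : IsGLB {a, b} (mul a b) := by
  constructor
  · rintro s hs
    simp only [Set.mem_insert_iff, Set.mem_singleton_iff] at hs
    rcases hs with rfl | rfl
    · rw [h.comm s b ⟨c, hca, hcb⟩]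
      calc mul b s ≤ mul ⊤ s := h.mono b ⊤ s ⟨c, hcb, hca⟩ le_top
        _ = s := h.top_mul s
    · calc mul a s ≤ mul ⊤ s := h.mono a ⊤ s ⟨c, hca, hcb⟩ le_top
        _ = s := h.top_mul s
  · intro d hd
    exact h.bound a b d (hd (Set.mem_insert _ _))
      (hd (Set.mem_insert_of_mem _ rfl))

lemma ncis_meet_le_left {f imp : R → R → R} (h : IsNCIS f imp) {a b c : R}
    (hca : c ≤ a) (hcb : c ≤ b) : f a b ≤ a :=
  (h.glb a b c hca hcb).1 (Set.mem_insert _ _)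

lemma ncis_meet_le_right {f imp : R → R → R} (h : IsNCIS f imp) {a b c : R}
    (hca : c ≤ a) (hcb : c ≤ b) : f a b ≤ b :=
  (h.glb a b c hca hcb).1 (Set.mem_insert_of_mem _ rfl)

lemma ncis_le_meet {f imp : R → R → R} (h : IsNCIS f imp) {a b d : R}
    (hda : d ≤ a) (hdb : d ≤ b) : d ≤ f a b := by
  refine (h.glb a b d hda hdb).2 ?_
  rintro s hs
  simp only [Set.mem_insert_iff, Set.mem_singleton_iff] at hs
  rcases hs with rfl | rfl <;> assumption

lemma ncis_comm {f imp : R → R → R} (h : IsNCIS f imp) {a b c : R}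
    (hca : c ≤ a) (hcb : c ≤ b) : f a b = f b a := by
  refine (h.glb a b c hca hcb).unique ?_
  rw [Set.pair_comm a b]
  exact h.glb b a c hcb hca
end Helpers

/-- The non-classical implication semilattices are exactly the divisible relatively
residuated join-semilattices satisfying `x ⊙ x = x` and
`y ≤ (x ⊔ z) → ((x ⊔ z) ⊙ (y ⊔ z))` (with `⊙ = ∧`). In particular, in a relatively
residuated join-semilattice with idempotent `⊙`, `a ⊙ b` is the infimum of `a` and
`b` whenever `a, b` have a common lower bound. -/
theorem stmt16 {R : Type*} [SemilatticeSup R] [OrderTop R] (f imp : R → R → R) :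
    (IsNCIS f imp ↔
      (IsRRJS f imp ∧ (∀ x y : R, f (x ⊔ y) (imp x y) = y) ∧
        (∀ x : R, f x x = x) ∧
        (∀ x y z : R, y ≤ imp (x ⊔ z) (f (x ⊔ z) (y ⊔ z))))) ∧
    (∀ (mul imp' : R → R → R), IsRRJS mul imp' → (∀ x : R, mul x x = x) →
      ∀ a b c : R, c ≤ a → c ≤ b → IsGLB {a, b} (mul a b)) := by
  constructor
  · constructor
    · intro h
      have idem : ∀ x : R, f x x = x := fun x =>
        le_antisymm (ncis_meet_le_left h le_rfl le_rfl) (ncis_le_meet h le_rfl le_rfl)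
      refine ⟨?_, h.ax2, idem, h.ax4⟩
      constructor
      · exact fun a b c hca hcb => ncis_le_meet h hca hcb
      · intro a
        refine (h.glb a ⊤ a le_rfl le_top).unique ?_
        constructor
        · rintro s hs
          simp only [Set.mem_insert_iff, Set.mem_singleton_iff] at hs
          rcases hs with rfl | rfl
          · exact le_rfl
          · exact le_top
        · exact fun d hd => hd (Set.mem_insert _ _)
      · intro a
        refine (h.glb ⊤ a a le_top le_rfl).unique ?_
        constructor
        · rintro s hs
          simp only [Set.mem_insert_iff, Set.mem_singleton_iff] at hs
          rcases hs with rfl | rfl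
          · exact le_top
          · exact le_rfl
        · exact fun d hd => hd (Set.mem_insert_of_mem _ rfl)
      · rintro a b ⟨c, hca, hcb⟩
        exact ncis_comm h hca hcb
      · rintro a b c ⟨d, hda, hdb, hdc⟩
        have hdab : d ≤ f a b := ncis_le_meet h hda hdb
        have hdbc : d ≤ f b c := ncis_le_meet h hdb hdc
        have hLab : f (f a b) c ≤ f a b := ncis_meet_le_left h hdab hdc
        have hLc : f (f a b) c ≤ c := ncis_meet_le_right h hdab hdc
        have hLa : f (f a b) c ≤ a := hLab.trans (ncis_meet_le_left h hda hdb)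
        have hLb : f (f a b) c ≤ b := hLab.trans (ncis_meet_le_right h hda hdb)
        have hRbc : f a (f b c) ≤ f b c := ncis_meet_le_right h hda hdbc
        have hRa : f a (f b c) ≤ a := ncis_meet_le_left h hda hdbc
        have hRb : f a (f b c) ≤ b := hRbc.trans (ncis_meet_le_left h hdb hdc)
        have hRc : f a (f b c) ≤ c := hRbc.trans (ncis_meet_le_right h hdb hdc)
        exact le_antisymm
          (ncis_le_meet h hLa (ncis_le_meet h hLb hLc))
          (ncis_le_meet h (ncis_le_meet h hRa hRb) hRc)
      · rintro a b c ⟨d, hda, hdc⟩ hab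
        exact ncis_le_meet h ((ncis_meet_le_left h hda hdc).trans hab)
          (ncis_meet_le_right h hda hdc)
      · intro x y z
        constructor
        · intro hm
          have hz : z ≤ f (x ⊔ z) (y ⊔ z) :=
            ncis_le_meet h le_sup_right le_sup_right
          have heq : f (x ⊔ z) (y ⊔ z) = z := le_antisymm hm hz
          have h4 := h.ax4 y x z
          rw [ncis_comm h (le_sup_right : z ≤ y ⊔ z) (le_sup_right : z ≤ x ⊔ z),
            heq, h.ax3] at h4
          exact sup_le h4 (h.ax1 y z)
        · intro hx
          have hm1 : f (x ⊔ z) (y ⊔ z) ≤ imp y z :=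
            (ncis_meet_le_left h (le_sup_right : z ≤ x ⊔ z) le_sup_right).trans hx
          have hm2 : f (x ⊔ z) (y ⊔ z) ≤ y ⊔ z :=
            ncis_meet_le_right h (le_sup_right : z ≤ x ⊔ z) le_sup_right
          calc f (x ⊔ z) (y ⊔ z) ≤ f (y ⊔ z) (imp y z) :=
                ncis_le_meet h hm2 hm1
            _ = z := h.ax2 y z
      · exact h.ax3
    · rintro ⟨hr, hdiv, _hidem, hax4⟩
      refine ⟨fun a b c hca hcb => rrjs_glb hr hca hcb, ?_, hdiv, hr.imp_sup, hax4⟩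
      intro x y
      have hm : f (y ⊔ y) (x ⊔ y) ≤ y := by
        rw [sup_idem]
        exact (rrjs_glb hr (le_refl y) (le_sup_right : y ≤ x ⊔ y)).1
          (Set.mem_insert _ _)
      have := (hr.adj y x y).mp hm
      rwa [sup_idem] at this
  · intro mul imp' hr _ a b c hca hcb
    exact rrjs_glb hr hca hcb
end

section
/- In any I-algebra, r(x,y,z) equals the infimum of x ∨ z and y ∨ z; that is, r(x,y,z) ≤ x ∨ z, r(x,y,z) ≤ y ∨ z, and every d with d ≤ x ∨ z and d ≤ y ∨ z satisfies d ≤ r(x,y,z). -/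
/-- An I-algebra: a join-semilattice with top `⊤` with a ternary operation `r`
and implication `imp` satisfying identities (1')-(10'). -/
structure IsIAlg {A : Type*} [SemilatticeSup A] [OrderTop A]
    (r : A → A → A → A) (imp : A → A → A) : Prop where
  ax1 : ∀ x y : A, y ≤ imp x y
  ax2 : ∀ x y : A, r x (imp x y) y = y
  ax3 : ∀ x y : A, imp (x ⊔ y) y = imp x y
  ax4 : ∀ x y z : A, y ≤ imp (x ⊔ z) (r x y z)
  ax5 : ∀ x y z : A, r x y z ≤ x ⊔ z
  ax6 : ∀ x y z : A, r x y z ≤ y ⊔ z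
  ax7 : ∀ x y z : A, r x (x ⊔ y) z = x ⊔ z
  ax8 : ∀ x y z : A, r x y z = r (x ⊔ z) (y ⊔ z) z
  ax9 : ∀ x y z : A, z ≤ r x y z
  ax10 : ∀ u x y z : A, r u (r x y z) z = r (r u x z) (r u y z) z

/-- In any I-algebra, r x y z is the infimum of x ⊔ z and y ⊔ z. -/
theorem stmt17 {A : Type*} [SemilatticeSup A] [OrderTop A]
    (r : A → A → A → A) (imp : A → A → A) (h : IsIAlg r imp) :
    ∀ x y z : A, r x y z ≤ x ⊔ z ∧ r x y z ≤ y ⊔ z ∧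
      ∀ d : A, d ≤ x ⊔ z → d ≤ y ⊔ z → d ≤ r x y z := by
  intro x y z
  refine ⟨h.ax5 x y z, h.ax6 x y z, ?_⟩
  intro d hdx hdy
  -- key: if d ≤ w ⊔ z then r d w z = d ⊔ z
  have key : ∀ w : A, d ≤ w ⊔ z → r d w z = d ⊔ z := by
    intro w hw
    have h1 : (d ⊔ z) ⊔ (w ⊔ z) = w ⊔ z := sup_eq_right.mpr (sup_le hw le_sup_right)
    calc r d w z = r (d ⊔ z) (w ⊔ z) z := h.ax8 d w z
      _ = r (d ⊔ z) ((d ⊔ z) ⊔ (w ⊔ z)) z := by rw [h1]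
      _ = (d ⊔ z) ⊔ z := h.ax7 (d ⊔ z) (w ⊔ z) z
      _ = d ⊔ z := by rw [sup_assoc, sup_idem]
  have hdd : r (d ⊔ z) (d ⊔ z) z = d ⊔ z := by
    have := h.ax7 (d ⊔ z) (d ⊔ z) z
    rw [sup_idem] at this; rwa [sup_assoc, sup_idem] at this
  have h10 := h.ax10 d x y z
  rw [key x hdx, key y hdy, hdd] at h10
  -- h10 : r d (r x y z) z = d ⊔ z
  have h6 := h.ax6 d (r x y z) z
  rw [h10] at h6
  have h9 := h.ax9 x y z
  calc d ≤ d ⊔ z := le_sup_left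
    _ ≤ r x y z ⊔ z := h6
    _ = r x y z := sup_eq_left.mpr h9
end

section
/- The variety of I-algebras is 3-permutable: the ternary terms t₁(x,y,z) = r(z, y → x, x) and t₂(x,y,z) = r(x, y → z, z) satisfy t₁(x,y,y) = x, t₁(x,x,y) = t₂(x,y,y), and t₂(x,x,y) = y in every I-algebra. -/
/-- The variety of I-algebras is 3-permutable: the terms
`t₁(x,y,z) = r(z, y → x, x)` and `t₂(x,y,z) = r(x, y → z, z)` satisfy
`t₁(x,y,y) = x`, `t₁(x,x,y) = t₂(x,y,y)` and `t₂(x,x,y) = y`. -/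
theorem stmt18 {A : Type*} [SemilatticeSup A] [OrderTop A]
    (r : A → A → A → A) (imp : A → A → A) (h : IsIAlg r imp) :
    (∀ x y : A, r y (imp y x) x = x) ∧
    (∀ x y : A, r y (imp x x) x = r x (imp y y) y) ∧
    (∀ x y : A, r x (imp x y) y = y) := by
  have hdiag : ∀ x y : A, r x y x = x := fun x y =>
    le_antisymm (by simpa using h.ax5 x y x) (h.ax9 x y x)
  have htop : ∀ x : A, imp x x = ⊤ := fun x =>
    le_antisymm le_top (by simpa [hdiag] using h.ax4 x (⊤ : A) x)
  have hrtop : ∀ x y : A, r y ⊤ x = y ⊔ x := fun x y => by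
    have := h.ax7 y ⊤ x
    simpa using this
  refine ⟨fun x y => h.ax2 y x, fun x y => ?_, fun x y => h.ax2 x y⟩
  rw [htop, htop, hrtop, hrtop, sup_comm]
end

section
/- In every I-algebra, x → y = 1 and y → x = 1 together hold if and only if x = y (so the variety of I-algebras is weakly regular via the terms x → y and y → x). -/
/-- In every I-algebra, `x → y = ⊤` and `y → x = ⊤` together hold iff `x = y`
(weak regularity via the terms `x → y` and `y → x`). -/
theorem stmt19 {A : Type*} [SemilatticeSup A] [OrderTop A]
    (r : A → A → A → A) (imp : A → A → A) (h : IsIAlg r imp) :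
    ∀ x y : A, (imp x y = ⊤ ∧ imp y x = ⊤) ↔ x = y := by
  have rtop : ∀ x z : A, r x ⊤ z = x ⊔ z := by
    intro x z
    have := h.ax7 x ⊤ z
    simpa using this
  intro x y
  constructor
  · rintro ⟨h1, h2⟩
    have e1 : x ⊔ y = y := by
      have := h.ax2 x y; rw [h1, rtop] at this; exact this
    have e2 : y ⊔ x = x := by
      have := h.ax2 y x; rw [h2, rtop] at this; exact this
    rw [sup_comm] at e2
    exact e2.symm.trans e1
  · rintro rfl
    have : (⊤ : A) ≤ imp x x := by
      have := h.ax4 x ⊤ x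
      simpa [rtop] using this
    exact ⟨top_le_iff.mp this, top_le_iff.mp this⟩
end
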